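/- Let ũ ∈ D[a] ∩ L^∞ be a minimizer of J(u) = (a[u,u] + A‖u‖²_∞)/‖u‖₂² with ‖ũ‖_∞ = 1, and let K = {v ∈ D[a] : |v| ≤ 1 m-a.e.}. Then ũ solves the variational inequality: ũ ∈ K and a[ũ, v − ũ] ≥ J(ũ) ∫ ũ (v − ũ) dm for all v ∈ K. -/

import Mathlib

open MeasureTheory Filter Topology ENNReal

/-! On functions with `|w| ≤ 1` a.e. the sup-norm term of `J` is at most `A`, with equality
at `ũ`. The segment `ũ + t (v - ũ)`, `t ∈ [0, 1]`, stays in `K` when `v ∈ K`, so `ũ` also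
minimises `T(w) = (a[w,w] + A) / ‖w‖₂²` along it. Numerator and denominator of `T` are
quadratic in `t`, so the one-sided derivative of `T` at `t = 0` is nonnegative, and that is
the variational inequality. -/

/-- An abstract Dirichlet form `(a, D[a])` on `L²(X, m)`: a symmetric, non-negative
bilinear form defined on a (dense) subspace of `L²`, satisfying the Markov property. -/
structure DirichletForm (X : Type) [MeasurableSpace X] (μ : Measure X) where
  dom : Set (X → ℝ)
  form : (X → ℝ) → (X → ℝ) → ℝ
  zero_mem : (0 : X → ℝ) ∈ dom
  dom_add : ∀ u ∈ dom, ∀ v ∈ dom, u + v ∈ dom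
  dom_smul : ∀ (c : ℝ), ∀ u ∈ dom, c • u ∈ dom
  memL2 : ∀ u ∈ dom, MemLp u 2 μ
  symm : ∀ u v, form u v = form v u
  add_left : ∀ u v w, form (u + v) w = form u w + form v w
  smul_left : ∀ (c : ℝ) (u v), form (c • u) v = c * form u v
  nonneg : ∀ u, 0 ≤ form u u
  markov : ∀ u ∈ dom, (fun x => min 1 (max (u x) 0)) ∈ dom ∧
    form (fun x => min 1 (max (u x) 0)) (fun x => min 1 (max (u x) 0)) ≤ form u u

lemma abs_add_mul_sub_le_one {x y t : ℝ} (hx : |x| ≤ 1) (hy : |y| ≤ 1) (ht₀ : 0 ≤ t)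
    (ht₁ : t ≤ 1) : |x + t * (y - x)| ≤ 1 := by
  rw [abs_le] at *
  constructor <;> nlinarith

lemma nonneg_of_eventually_mul_add_sq_mul_nonneg {α β : ℝ}
    (h : ∀ᶠ t in 𝓝[>] 0, 0 ≤ t * α + t ^ 2 * β) : 0 ≤ α := by
  have hlim : Tendsto (fun t : ℝ => α + t * β) (𝓝[>] 0) (𝓝 α) := by
    have : Tendsto (fun t : ℝ => α + t * β) (𝓝 0) (𝓝 (α + 0 * β)) :=
      (continuous_const.add (continuous_id.mul continuous_const)).tendsto 0
    simpa using this.mono_left nhdsWithin_le_nhds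
  refine ge_of_tendsto hlim ?_
  filter_upwards [h, self_mem_nhdsWithin] with t ht (ht₀ : 0 < t)
  exact nonneg_of_mul_nonneg_right (by linear_combination ht) ht₀

section

variable {X : Type} [MeasurableSpace X] {μ : Measure X}

lemma eLpNorm_top_le_one_iff {f : X → ℝ} :
    eLpNorm f ⊤ μ ≤ 1 ↔ ∀ᵐ x ∂μ, |f x| ≤ 1 := by
  rw [eLpNorm_exponent_top]
  constructor
  · intro h
    filter_upwards [ae_le_eLpNormEssSup (f := f) (μ := μ)] with x hx
    have : ‖f x‖ₑ ≤ 1 := hx.trans h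
    rw [enorm_eq_nnnorm] at this
    exact_mod_cast this
  · intro h
    simpa using eLpNormEssSup_le_of_ae_bound (μ := μ) (f := f) (C := 1) h

lemma integral_sq_pos_iff {f : X → ℝ} (hf : MemLp f 2 μ) :
    0 < ∫ x, f x ^ 2 ∂μ ↔ eLpNorm f 2 μ ≠ 0 := by
  rw [(integral_nonneg fun x => sq_nonneg (f x)).lt_iff_ne', ne_eq, ne_eq, not_iff_not,
    integral_eq_zero_iff_of_nonneg (fun x => sq_nonneg (f x)) hf.integrable_sq,
    eLpNorm_eq_zero_iff hf.1 two_ne_zero]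
  simp [Filter.EventuallyEq]

lemma integral_add_smul_sq {u z : X → ℝ} (hu : MemLp u 2 μ) (hz : MemLp z 2 μ) (t : ℝ) :
    ∫ x, (u + t • z) x ^ 2 ∂μ =
      ∫ x, u x ^ 2 ∂μ + 2 * t * ∫ x, u x * z x ∂μ + t ^ 2 * ∫ x, z x ^ 2 ∂μ := by
  have huz : Integrable (fun x => u x * z x) μ := hu.integrable_mul hz
  have hexp : (fun x => (u + t • z) x ^ 2)
      = fun x => u x ^ 2 + (2 * t * (u x * z x) + t ^ 2 * z x ^ 2) := by
    funext x; simp only [Pi.add_apply, Pi.smul_apply, smul_eq_mul]; ring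
  have hrest : Integrable (fun x => 2 * t * (u x * z x) + t ^ 2 * z x ^ 2) μ :=
    (huz.const_mul _).add (hz.integrable_sq.const_mul _)
  rw [hexp, integral_add hu.integrable_sq hrest,
    integral_add (huz.const_mul _) (hz.integrable_sq.const_mul _), integral_const_mul,
    integral_const_mul, add_assoc]

lemma eventually_integral_add_smul_sq_pos {u z : X → ℝ} (hu : MemLp u 2 μ) (hz : MemLp z 2 μ)
    (hpos : 0 < ∫ x, u x ^ 2 ∂μ) :
    ∀ᶠ t in 𝓝 (0 : ℝ), 0 < ∫ x, (u + t • z) x ^ 2 ∂μ := by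
  have hcont : Continuous fun t : ℝ => ∫ x, (u + t • z) x ^ 2 ∂μ := by
    simp_rw [integral_add_smul_sq hu hz]
    fun_prop
  refine continuousAt_const.eventually_lt hcont.continuousAt ?_
  simpa using hpos

end

namespace DirichletForm

variable {X : Type} [MeasurableSpace X] {μ : Measure X} (a : DirichletForm X μ)

lemma form_add_right (p q r : X → ℝ) : a.form p (q + r) = a.form p q + a.form p r := by
  rw [a.symm, a.add_left, a.symm q, a.symm r]

lemma form_smul_right (c : ℝ) (p q : X → ℝ) : a.form p (c • q) = c * a.form p q := by
  rw [a.symm, a.smul_left, a.symm]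

lemma form_add_smul_self (u z : X → ℝ) (t : ℝ) :
    a.form (u + t • z) (u + t • z) = a.form u u + 2 * t * a.form u z + t ^ 2 * a.form z z := by
  rw [a.add_left, a.smul_left, a.form_add_right, a.form_add_right, a.form_smul_right,
    a.form_smul_right, a.symm z u]
  ring

lemma add_smul_sub_mem {u v : X → ℝ} (hu : u ∈ a.dom) (hv : v ∈ a.dom) (t : ℝ) :
    u + t • (v - u) ∈ a.dom := by
  rw [sub_eq_add_neg, ← neg_one_smul ℝ u]
  exact a.dom_add u hu _ (a.dom_smul t _ (a.dom_add v hv _ (a.dom_smul (-1) u hu)))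

/-- The paper's `T`; it agrees with `J` on functions of sup-norm `1`. -/
noncomputable def penalizedQuotient (A : ℝ) (v : X → ℝ) : ℝ :=
  (a.form v v + A) / ∫ x, v x ^ 2 ∂μ

lemma div_integral_sq_le_penalizedQuotient {A : ℝ} (hA : 0 ≤ A) {w : X → ℝ}
    (hw : eLpNorm w ⊤ μ ≤ 1) :
    (a.form w w + A * (eLpNorm w ⊤ μ).toReal ^ 2) / ∫ x, w x ^ 2 ∂μ ≤
      a.penalizedQuotient A w := by
  have hnorm : (eLpNorm w ⊤ μ).toReal ^ 2 ≤ 1 :=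
    pow_le_one₀ ENNReal.toReal_nonneg (ENNReal.toReal_le_of_le_ofReal zero_le_one (by simpa))
  refine div_le_div_of_nonneg_right ?_ (integral_nonneg fun x => sq_nonneg (w x))
  nlinarith

lemma mul_integral_mul_le_form_of_penalizedQuotient_le {A : ℝ} {u z : X → ℝ}
    (hu : MemLp u 2 μ) (hz : MemLp z 2 μ) (hpos : 0 < ∫ x, u x ^ 2 ∂μ)
    (hmin : ∀ᶠ t in 𝓝[>] (0 : ℝ),
      a.penalizedQuotient A u ≤ a.penalizedQuotient A (u + t • z)) :
    a.penalizedQuotient A u * ∫ x, u x * z x ∂μ ≤ a.form u z := by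
  set J := a.penalizedQuotient A u
  have hJ : J * ∫ x, u x ^ 2 ∂μ = a.form u u + A := div_mul_cancel₀ _ hpos.ne'
  suffices 0 ≤ 2 * (a.form u z - J * ∫ x, u x * z x ∂μ) by linarith
  refine nonneg_of_eventually_mul_add_sq_mul_nonneg
    (β := a.form z z - J * ∫ x, z x ^ 2 ∂μ) ?_
  filter_upwards [hmin, nhdsWithin_le_nhds (eventually_integral_add_smul_sq_pos hu hz hpos)]
    with t ht hpos_t
  have := (le_div_iff₀ hpos_t).1 ht
  rw [integral_add_smul_sq hu hz, a.form_add_smul_self] at this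
  linear_combination this - hJ

end DirichletForm

/-- Case `p = 1`: a minimizer `ũ` of `J` with `‖ũ‖_∞ = 1` solves the variational
inequality `a[ũ, v - ũ] ≥ J(ũ) ∫ ũ (v - ũ) dm` over `K = {v ∈ D[a] : |v| ≤ 1 a.e.}`. -/
theorem minimizer_solves_variational_inequality
    {X : Type} [MeasurableSpace X] (μ : Measure X) (a : DirichletForm X μ)
    (A : ℝ) (hA : 0 < A)
    (u : X → ℝ) (hu : u ∈ a.dom) (huinf : eLpNorm u ⊤ μ = 1)
    (hune : eLpNorm u 2 μ ≠ 0)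
    (hmin : ∀ v ∈ a.dom, eLpNorm v 2 μ ≠ 0 → MemLp v ⊤ μ →
      (a.form u u + A * ((eLpNorm u ⊤ μ).toReal) ^ 2) / (∫ x, (u x) ^ 2 ∂μ) ≤
        (a.form v v + A * ((eLpNorm v ⊤ μ).toReal) ^ 2) / (∫ x, (v x) ^ 2 ∂μ)) :
    (u ∈ a.dom ∧ (∀ᵐ x ∂μ, |u x| ≤ 1)) ∧
      ∀ v ∈ a.dom, (∀ᵐ x ∂μ, |v x| ≤ 1) →
        ((a.form u u + A * ((eLpNorm u ⊤ μ).toReal) ^ 2) / (∫ x, (u x) ^ 2 ∂μ)) *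
            ∫ x, u x * (v x - u x) ∂μ ≤
          a.form u (v - u) := by
  have hu_le : ∀ᵐ x ∂μ, |u x| ≤ 1 := eLpNorm_top_le_one_iff.1 huinf.le
  refine ⟨⟨hu, hu_le⟩, fun v hv hv_le => ?_⟩
  have hu2 := a.memL2 u hu
  have hz2 := (a.memL2 v hv).sub hu2
  have hpos : 0 < ∫ x, u x ^ 2 ∂μ := (integral_sq_pos_iff hu2).2 hune
  have hJ : (a.form u u + A * (eLpNorm u ⊤ μ).toReal ^ 2) / ∫ x, u x ^ 2 ∂μ =
      a.penalizedQuotient A u := by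
    simp [DirichletForm.penalizedQuotient, huinf]
  rw [hJ]
  refine a.mul_integral_mul_le_form_of_penalizedQuotient_le hu2 hz2 hpos ?_
  filter_upwards [nhdsWithin_le_nhds (eventually_integral_add_smul_sq_pos hu2 hz2 hpos),
    Ioo_mem_nhdsGT one_pos] with t hw_pos ⟨ht₀, ht₁⟩
  have hw := a.add_smul_sub_mem hu hv t
  have hw_le : eLpNorm (u + t • (v - u)) ⊤ μ ≤ 1 := eLpNorm_top_le_one_iff.2 <| by
    filter_upwards [hu_le, hv_le] with x hux hvx
    exact abs_add_mul_sub_le_one hux hvx ht₀.le ht₁.le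
  calc a.penalizedQuotient A u
      = (a.form u u + A * (eLpNorm u ⊤ μ).toReal ^ 2) / ∫ x, u x ^ 2 ∂μ := hJ.symm
    _ ≤ _ := hmin _ hw ((integral_sq_pos_iff (a.memL2 _ hw)).1 hw_pos)
        ⟨(a.memL2 _ hw).1, hw_le.trans_lt one_lt_top⟩
    _ ≤ a.penalizedQuotient A (u + t • (v - u)) :=
        a.div_integral_sq_le_penalizedQuotient hA.le hw_le
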